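/- Separability of the forgetful functor: Let C be an A-coring. The forgetful functor U_A: Comod-C → Mod-A is separable if and only if there exists an A-bimodule map γ: C ⊗_A C → A such that γ ∘ Δ_C = ε_C and, for all c, c' ∈ C, c₍₁₎ γ(c₍₂₎ ⊗ c') = γ(c ⊗ c'₍₁₎) c'₍₂₎ (in Sweedler notation, i.e. (C ⊗ γ)(Δ_C ⊗ C) = (γ ⊗ C)(C ⊗ Δ_C) as maps C ⊗_A C → C). -/

import Mathlib

/-! # Preamble: corings and comodules
We follow "Separable functors in corings" (J. Gómez-Torrecillas).
`K`-algebras are monoid objects in `ModuleCat K`; a `T`-`A`-bimodule is a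
1-morphism `T ⟶ A` in the bicategory of algebras and bimodules, whose
composition is the tensor product over the middle algebra. -/

open CategoryTheory Limits Bicategory

noncomputable section
universe u

namespace CoringSep

variable (K : Type u) [CommRing K]

open MonoidalCategory in
instance (X : ModuleCat.{u} K) : PreservesColimitsOfSize.{0,0} (tensorLeft X) := by
  have : PreservesColimits (tensorLeft X) := (ihom.adjunction X).leftAdjoint_preservesColimits
  exact preservesSmallestColimits_of_preservesColimits _

open MonoidalCategory in
instance (X : ModuleCat.{u} K) : PreservesColimitsOfSize.{0,0} (tensorRight X) := by
  have : PreservesColimits (tensorRight X) :=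
    preservesColimits_of_natIso
      (NatIso.ofComponents (fun Y => β_ X Y) (fun f => by simp) :
        tensorLeft X ≅ tensorRight X)
  exact preservesSmallestColimits_of_preservesColimits _

/-- `K`-algebras (as monoid objects in `K`-modules), wrapped so that they form
a bicategory whose 1-morphisms `A ⟶ B` are `A`-`B`-bimodules and where
composition of 1-morphisms is `⊗_B`. -/
structure Alg where
  val : Mon (ModuleCat.{u} K)

variable {K}

instance : Bicategory (Alg K) where
  Hom X Y := Bimod X.val Y.val
  homCategory X Y := (inferInstance : Category (Bimod X.val Y.val))
  id X := Bimod.regular X.val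
  comp M N := M.tensorBimod N
  whiskerLeft L _ _ f := Bimod.whiskerLeft L f
  whiskerRight f N := Bimod.whiskerRight f N
  associator := Bimod.associatorBimod
  leftUnitor := Bimod.leftUnitorBimod
  rightUnitor := Bimod.rightUnitorBimod
  whiskerLeft_id _ _ := Bimod.whiskerLeft_id_bimod
  whiskerLeft_comp M _ _ _ f g := Bimod.whiskerLeft_comp_bimod M f g
  id_whiskerLeft := Bimod.id_whiskerLeft_bimod
  comp_whiskerLeft M N _ _ f := Bimod.comp_whiskerLeft_bimod M N f
  id_whiskerRight _ _ := Bimod.id_whiskerRight_bimod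
  comp_whiskerRight f g Q := Bimod.comp_whiskerRight_bimod f g Q
  whiskerRight_id := Bimod.whiskerRight_id_bimod
  whiskerRight_comp := Bimod.whiskerRight_comp_bimod
  whisker_assoc M _ _ f P := Bimod.whisker_assoc_bimod M f P
  whisker_exchange := Bimod.whisker_exchange_bimod
  pentagon := Bimod.pentagon_bimod
  triangle := Bimod.triangle_bimod

variable (K) in
/-- The base ring `K`, as a `K`-algebra; right `A`-modules are the
1-morphisms `base K ⟶ A`. -/
def base : Alg K := ⟨Mon.trivial (ModuleCat.{u} K)⟩

variable {a b s t : Alg K}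

/-- An `A`-coring: an `A`-bimodule `X` together with a coassociative,
counital `A`-bimodule comultiplication `X ⟶ X ⊗_A X`. -/
structure Coring (a : Alg K) where
  X : a ⟶ a
  comul : X ⟶ X ≫ X
  counit : X ⟶ 𝟙 a
  coassoc : comul ≫ comul ▷ X ≫ (α_ X X X).hom = comul ≫ X ◁ comul
  comul_counit : comul ≫ X ◁ counit ≫ (ρ_ X).hom = 𝟙 X
  counit_comul : comul ≫ counit ▷ X ≫ (λ_ X).hom = 𝟙 X

/-- A right `C`-comodule which is a `T`-`A`-bimodule with `T`-linear coaction;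
plain right `C`-comodules are obtained for `T = base K`. -/
structure RightComodule (t : Alg K) {a : Alg K} (C : Coring a) where
  M : t ⟶ a
  coact : M ⟶ M ≫ C.X
  coassoc : coact ≫ coact ▷ C.X ≫ (α_ M C.X C.X).hom = coact ≫ M ◁ C.comul
  counit : coact ≫ M ◁ C.counit ≫ (ρ_ M).hom = 𝟙 M

/-- A left `C`-comodule which is an `A`-`S`-bimodule with `S`-linear coaction. -/
structure LeftComodule {a : Alg K} (C : Coring a) (s : Alg K) where
  M : a ⟶ s
  coact : M ⟶ C.X ≫ M
  coassoc : coact ≫ C.comul ▷ M ≫ (α_ C.X C.X M).hom = coact ≫ C.X ◁ coact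
  counit : coact ≫ C.counit ▷ M ≫ (λ_ M).hom = 𝟙 M

/-- A `C'`-`C`-bicomodule. -/
structure Bicomodule {a' a : Alg K} (C' : Coring a') (C : Coring a) where
  M : a' ⟶ a
  rcoact : M ⟶ M ≫ C.X
  lcoact : M ⟶ C'.X ≫ M
  rcoassoc : rcoact ≫ rcoact ▷ C.X ≫ (α_ M C.X C.X).hom = rcoact ≫ M ◁ C.comul
  rcounit : rcoact ≫ M ◁ C.counit ≫ (ρ_ M).hom = 𝟙 M
  lcoassoc : lcoact ≫ C'.comul ▷ M ≫ (α_ C'.X C'.X M).hom = lcoact ≫ C'.X ◁ lcoact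
  lcounit : lcoact ≫ C'.counit ▷ M ≫ (λ_ M).hom = 𝟙 M
  compat : rcoact ≫ lcoact ▷ C.X ≫ (α_ C'.X M C.X).hom = lcoact ≫ C'.X ◁ rcoact

variable {C : Coring a}

/-- The right comodule underlying a bicomodule. -/
def Bicomodule.toRight {a' : Alg K} {C' : Coring a'} (M : Bicomodule C' C) :
    RightComodule a' C := ⟨M.M, M.rcoact, M.rcoassoc, M.rcounit⟩

/-- The left comodule underlying a bicomodule. -/
def Bicomodule.toLeft {a' : Alg K} {C' : Coring a'} (M : Bicomodule C' C) :
    LeftComodule C' a := ⟨M.M, M.lcoact, M.lcoassoc, M.lcounit⟩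

/-- The coring `C`, considered as a right comodule over itself. -/
def coregular (C : Coring a) : RightComodule a C :=
  ⟨C.X, C.comul, C.coassoc, C.comul_counit⟩

/-- Morphisms of right `C`-comodules. -/
@[ext] structure ComodHom (M N : RightComodule t C) where
  f : M.M ⟶ N.M
  colinear : M.coact ≫ f ▷ C.X = f ≫ N.coact

instance : Category (RightComodule t C) where
  Hom := ComodHom
  id M := ⟨𝟙 M.M, by simp⟩
  comp f g := ⟨f.f ≫ g.f, by
    rw [Bicategory.comp_whiskerRight, ← Category.assoc, f.colinear, Category.assoc, g.colinear,
      Category.assoc]⟩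

@[simp] theorem comod_id_f (M : RightComodule t C) : (𝟙 M : ComodHom M M).f = 𝟙 M.M := rfl
@[simp] theorem comod_comp_f {M N P : RightComodule t C} (f : M ⟶ N) (g : N ⟶ P) :
    (f ≫ g).f = f.f ≫ g.f := rfl

@[ext] theorem comodHom_ext' {M N : RightComodule t C} (f g : M ⟶ N) (h : f.f = g.f) : f = g :=
  ComodHom.ext h

/-- The category of (plain) right comodules over a coring. -/
abbrev Comod (C : Coring a) := RightComodule (base K) C

@[simp] lemma bimod_comp_hom {x y : Alg K} {M N P : x ⟶ y} (f : M ⟶ N) (g : N ⟶ P) :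
    (f ≫ g).hom = f.hom ≫ g.hom := rfl

@[simp] lemma bimod_id_hom {x y : Alg K} (M : x ⟶ y) :
    Bimod.Hom.hom (𝟙 M) = 𝟙 M.X := rfl

/-- The forgetful functor from right `C`-comodules to the underlying
bimodule (module) category. -/
def forgetComod (t : Alg K) (C : Coring a) : RightComodule t C ⥤ (t ⟶ a) where
  obj M := M.M
  map f := f.f

/-- The functor `- ⊗_A N` given by postcomposition with a 1-morphism (an
`A`-`S`-bimodule) `N`. -/
def postF (t : Alg K) (N : a ⟶ s) : (t ⟶ a) ⥤ (t ⟶ s) where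
  obj M := M ≫ N
  map f := f ▷ N

/-- The functor `W ⊗_A -` given by precomposition with a `T`-`A`-bimodule `W`. -/
def preF (W : t ⟶ a) (s : Alg K) : (a ⟶ s) ⥤ (t ⟶ s) where
  obj N := W ≫ N
  map f := W ◁ f

/-- A functor *preserves the equalizer* of a pair `(f, g)` if it sends any
equalizer fork of `(f, g)` to a limit cone. -/
def PreservesEqualizerOf {𝒞 𝒟 : Type*} [Category 𝒞] [Category 𝒟] (F : 𝒞 ⥤ 𝒟)
    {X Y : 𝒞} (f g : X ⟶ Y) : Prop :=
  ∀ c : Fork f g, IsLimit c → Nonempty (IsLimit (F.mapCone c))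

/-- `N` is flat as a left `A`-module: `- ⊗_A N` preserves all equalizers of
right `A`-module maps. -/
def LeftFlat (N : a ⟶ s) : Prop :=
  ∀ (t : Alg K) {X Y : t ⟶ a} (f g : X ⟶ Y), PreservesEqualizerOf (postF t N) f g

/-- `W` is flat as a right `A`-module: `W ⊗_A -` preserves all equalizers of
left `A`-module maps. -/
def RightFlat (W : t ⟶ a) : Prop :=
  ∀ (s : Alg K) {X Y : a ⟶ s} (f g : X ⟶ Y), PreservesEqualizerOf (preF W s) f g

section Cotensor

/-- The first map `ρ_M ⊗_A N` in the equalizer diagram defining the cotensor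
product `M □_C N`. -/
def cotensorFst (M : RightComodule t C) (N : LeftComodule C s) :
    M.M ≫ N.M ⟶ (M.M ≫ C.X) ≫ N.M :=
  M.coact ▷ N.M

/-- The second map `M ⊗_A λ_N` in the equalizer diagram defining `M □_C N`. -/
def cotensorSnd (M : RightComodule t C) (N : LeftComodule C s) :
    M.M ≫ N.M ⟶ (M.M ≫ C.X) ≫ N.M :=
  M.M ◁ N.coact ≫ (α_ M.M C.X N.M).inv

/-- A choice of cotensor product `M □_C N`: an equalizer of the pair
`(ρ_M ⊗_A N, M ⊗_A λ_N)` in the category of `T`-`S`-bimodules. -/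
structure CotensorFork (M : RightComodule t C) (N : LeftComodule C s) where
  pt : t ⟶ s
  ι : pt ⟶ M.M ≫ N.M
  w : ι ≫ cotensorFst M N = ι ≫ cotensorSnd M N
  isLimit : IsLimit (Fork.ofι ι w)

end Cotensor

/-- A functor `F` is *separable* if the natural transformation
`Hom(-,-) ⟶ Hom(F-,F-)` of bifunctors is a split monomorphism, i.e. admits a
retraction `ζ` natural in both variables. -/
def Functor.Separable {𝒞 𝒟 : Type*} [Category 𝒞] [Category 𝒟] (F : 𝒞 ⥤ 𝒟) : Prop :=
  ∃ ζ : ∀ X Y : 𝒞, (F.obj X ⟶ F.obj Y) → (X ⟶ Y),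
    (∀ (X Y : 𝒞) (f : X ⟶ Y), ζ X Y (F.map f) = f) ∧
    (∀ (X X' Y Y' : 𝒞) (x : X' ⟶ X) (y : Y ⟶ Y') (h : F.obj X ⟶ F.obj Y),
      ζ X' Y' (F.map x ≫ h ≫ F.map y) = x ≫ ζ X Y h ≫ y)

end CoringSep

namespace CoringSep
open CategoryTheory Limits Bicategory

-- INSERT HERE
section Statement18Aux

variable {K : Type u} [CommRing K] {a : Alg K}

/-- comodule coassociativity, in inverse-associator form -/
lemma coact_whisker {C : Coring a} (M : Comod C) :
    M.coact ≫ M.coact ▷ C.X = M.coact ≫ M.M ◁ C.comul ≫ (α_ M.M C.X C.X).inv := by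
  rw [← cancel_mono (α_ M.M C.X C.X).hom]
  simpa [Category.assoc] using M.coassoc

/-- The free right `C`-comodule on a right module `Z`. -/
abbrev Fr (C : Coring a) (Z : base K ⟶ a) : Comod C where
  M := Z ≫ C.X
  coact := Z ◁ C.comul ≫ (α_ Z C.X C.X).inv
  coassoc := by
    calc (Z ◁ C.comul ≫ (α_ Z C.X C.X).inv) ≫ (Z ◁ C.comul ≫ (α_ Z C.X C.X).inv) ▷ C.X ≫
          (α_ (Z ≫ C.X) C.X C.X).hom
        = Z ◁ (C.comul ≫ C.comul ▷ C.X ≫ (α_ C.X C.X C.X).hom) ≫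
            (α_ Z C.X (C.X ≫ C.X)).inv := by bicategory
      _ = Z ◁ (C.comul ≫ C.X ◁ C.comul) ≫ (α_ Z C.X (C.X ≫ C.X)).inv := by rw [C.coassoc]
      _ = (Z ◁ C.comul ≫ (α_ Z C.X C.X).inv) ≫ (Z ≫ C.X) ◁ C.comul := by bicategory
  counit := by
    calc (Z ◁ C.comul ≫ (α_ Z C.X C.X).inv) ≫ (Z ≫ C.X) ◁ C.counit ≫ (ρ_ (Z ≫ C.X)).hom
        = Z ◁ (C.comul ≫ C.X ◁ C.counit ≫ (ρ_ C.X).hom) := by bicategory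
      _ = 𝟙 _ := by rw [C.comul_counit, Bicategory.whiskerLeft_id]

@[simp] lemma Fr_M (C : Coring a) (Z : base K ⟶ a) : (Fr C Z).M = Z ≫ C.X := rfl
@[simp] lemma Fr_coact (C : Coring a) (Z : base K ⟶ a) :
    (Fr C Z).coact = Z ◁ C.comul ≫ (α_ Z C.X C.X).inv := rfl

/-- Functoriality of the free comodule. -/
def FrMap (C : Coring a) {Z Z' : base K ⟶ a} (g : Z ⟶ Z') : Fr C Z ⟶ Fr C Z' where
  f := g ▷ C.X
  colinear := by
    dsimp
    calc (Z ◁ C.comul ≫ (α_ Z C.X C.X).inv) ≫ (g ▷ C.X) ▷ C.X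
        = (Z ◁ C.comul ≫ g ▷ (C.X ≫ C.X)) ≫ (α_ Z' C.X C.X).inv := by bicategory
      _ = (g ▷ C.X ≫ Z' ◁ C.comul) ≫ (α_ Z' C.X C.X).inv := by rw [whisker_exchange]
      _ = g ▷ C.X ≫ Z' ◁ C.comul ≫ (α_ Z' C.X C.X).inv := by rw [Category.assoc]

@[simp] lemma FrMap_f (C : Coring a) {Z Z' : base K ⟶ a} (g : Z ⟶ Z') :
    (FrMap C g).f = g ▷ C.X := rfl

/-- The counit-of-adjunction module map `Z ⊗ C → Z`. -/
def vmap (C : Coring a) (Z : base K ⟶ a) : (Fr C Z).M ⟶ Z := Z ◁ C.counit ≫ (ρ_ Z).hom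

lemma vmap_natural (C : Coring a) {Z Z' : base K ⟶ a} (g : Z ⟶ Z') :
    (g ▷ C.X) ≫ vmap C Z' = vmap C Z ≫ g := by
  dsimp [vmap]
  calc g ▷ C.X ≫ Z' ◁ C.counit ≫ (ρ_ Z').hom
      = (Z ◁ C.counit ≫ g ▷ 𝟙 a) ≫ (ρ_ Z').hom := by
        rw [← Category.assoc, ← whisker_exchange]
    _ = Z ◁ C.counit ≫ (ρ_ Z).hom ≫ g := by rw [Category.assoc, rightUnitor_naturality]
    _ = _ := by rw [Category.assoc]

/-- The coaction, as a comodule morphism into the free comodule. -/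
def coactHom {C : Coring a} (M : Comod C) : M ⟶ Fr C M.M where
  f := M.coact
  colinear := by
    dsimp
    rw [← Category.assoc, coact_whisker M, Category.assoc]

@[simp] lemma coactHom_f {C : Coring a} (M : Comod C) : (coactHom M).f = M.coact := rfl

section Backward

variable {C : Coring a} (γ : C.X ≫ C.X ⟶ 𝟙 a)

/-- The retraction of `Hom → Hom ∘ forget` built from a cointegral. -/
def zeta (M N : Comod C) (h : M.M ⟶ N.M) : M.M ⟶ N.M :=
  M.coact ≫ h ▷ C.X ≫ N.coact ▷ C.X ≫ (α_ N.M C.X C.X).hom ≫ N.M ◁ γ ≫ (ρ_ N.M).hom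

lemma zeta_retraction (hγ1 : C.comul ≫ γ = C.counit) (M N : Comod C) (f : M ⟶ N) :
    zeta γ M N f.f = f.f := by
  dsimp [zeta]
  slice_lhs 1 2 => rw [f.colinear]
  slice_lhs 2 3 => rw [coact_whisker N]
  simp only [Category.assoc, Iso.inv_hom_id_assoc]
  rw [← Bicategory.whiskerLeft_comp_assoc, hγ1]
  slice_lhs 2 4 => rw [N.counit]
  simp

lemma zeta_colinear
    (hγ2 : C.comul ▷ C.X ≫ (α_ C.X C.X C.X).hom ≫ C.X ◁ γ ≫ (ρ_ C.X).hom =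
      C.X ◁ C.comul ≫ (α_ C.X C.X C.X).inv ≫ γ ▷ C.X ≫ (λ_ C.X).hom)
    (M N : Comod C) (h : M.M ⟶ N.M) :
    M.coact ≫ (zeta γ M N h) ▷ C.X = zeta γ M N h ≫ N.coact := by
  have claim1 : M.coact ≫ (zeta γ M N h) ▷ C.X =
      M.coact ≫ h ▷ C.X ≫ N.coact ▷ C.X ≫ (α_ N.M C.X C.X).hom ≫
        N.M ◁ (C.X ◁ C.comul ≫ (α_ C.X C.X C.X).inv ≫ γ ▷ C.X ≫ (λ_ C.X).hom) := by
    dsimp [zeta]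
    simp only [comp_whiskerRight, Category.assoc]
    slice_lhs 1 2 => rw [coact_whisker M]
    slice_lhs 3 4 => rw [← associator_inv_naturality_left]
    slice_lhs 2 3 => rw [whisker_exchange]
    slice_lhs 4 5 => rw [← associator_inv_naturality_left]
    slice_lhs 3 4 => rw [whisker_exchange]
    simp only [Category.assoc]
    bicategory
  have claim2 : zeta γ M N h ≫ N.coact =
      M.coact ≫ h ▷ C.X ≫ N.coact ▷ C.X ≫ (α_ N.M C.X C.X).hom ≫
        N.M ◁ (C.comul ▷ C.X ≫ (α_ C.X C.X C.X).hom ≫ C.X ◁ γ ≫ (ρ_ C.X).hom) := by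
    dsimp [zeta]
    simp only [Category.assoc]
    slice_lhs 6 7 => rw [← rightUnitor_naturality]
    slice_lhs 5 6 => rw [whisker_exchange]
    slice_lhs 4 5 => rw [← associator_naturality_left]
    slice_lhs 3 4 => rw [← comp_whiskerRight, coact_whisker N, comp_whiskerRight, comp_whiskerRight]
    simp only [Category.assoc]
    bicategory
  rw [claim1, claim2, hγ2]

lemma zeta_natural (M M' N N' : Comod C) (x : M' ⟶ M) (y : N ⟶ N') (h : M.M ⟶ N.M) :
    zeta γ M' N' (x.f ≫ h ≫ y.f) = x.f ≫ zeta γ M N h ≫ y.f := by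
  dsimp [zeta]
  simp only [comp_whiskerRight, Category.assoc]
  slice_lhs 1 2 => rw [x.colinear]
  slice_lhs 4 5 => rw [← comp_whiskerRight, ← y.colinear, comp_whiskerRight]
  slice_lhs 5 6 => rw [associator_naturality_left]
  slice_lhs 6 7 => rw [← whisker_exchange]
  slice_lhs 7 8 => rw [rightUnitor_naturality]

end Backward

end Statement18Aux

section Statement18Kit

/-- compatibility: the unit of a monoid object. -/
abbrev _root_.CategoryTheory.Mon.one {𝒞 : Type*} [Category 𝒞] [MonoidalCategory 𝒞] (M : Mon 𝒞) :
    MonoidalCategory.tensorUnit 𝒞 ⟶ M.X := MonObj.one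
/-- compatibility: the multiplication of a monoid object. -/
abbrev _root_.CategoryTheory.Mon.mul {𝒞 : Type*} [Category 𝒞] [MonoidalCategory 𝒞] (M : Mon 𝒞) :
    MonoidalCategory.tensorObj M.X M.X ⟶ M.X := MonObj.mul
lemma _root_.CategoryTheory.Mon.one_mul {𝒞 : Type*} [Category 𝒞] [MonoidalCategory 𝒞] (M : Mon 𝒞) :
    MonoidalCategory.whiskerRight M.one M.X ≫ M.mul = (MonoidalCategory.leftUnitor M.X).hom :=
  MonObj.one_mul M.X
lemma _root_.CategoryTheory.Mon.mul_one {𝒞 : Type*} [Category 𝒞] [MonoidalCategory 𝒞] (M : Mon 𝒞) :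
    MonoidalCategory.whiskerLeft M.X M.one ≫ M.mul = (MonoidalCategory.rightUnitor M.X).hom :=
  MonObj.mul_one M.X
lemma _root_.CategoryTheory.Mon.mul_assoc {𝒞 : Type*} [Category 𝒞] [MonoidalCategory 𝒞]
    (M : Mon 𝒞) : MonoidalCategory.whiskerRight M.mul M.X ≫ M.mul =
      (MonoidalCategory.associator M.X M.X M.X).hom ≫ MonoidalCategory.whiskerLeft M.X M.mul ≫
        M.mul :=
  MonObj.mul_assoc M.X

variable {K : Type u} [CommRing K]

lemma happly {M N : ModuleCat.{u} K} {f g : M ⟶ N} (h : f = g) (x : M) : f x = g x := by rw [h]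

lemma el_comp {M N P : ModuleCat.{u} K} (f : M ⟶ N) (g : N ⟶ P) (x : M) :
    (f ≫ g) x = g (f x) := rfl

lemma el_id {M : ModuleCat.{u} K} (x : M) : (𝟙 M : M ⟶ M) x = x := rfl

lemma el_wrM {L M : ModuleCat.{u} K} (f : L ⟶ M) (N : ModuleCat.{u} K) (l : L) (n : N) :
    (MonoidalCategory.whiskerRight f N) (l ⊗ₜ n) = f l ⊗ₜ n := by
  exact ModuleCat.MonoidalCategory.whiskerRight_apply f N l n

lemma el_wlM (L : ModuleCat.{u} K) {M N : ModuleCat.{u} K} (f : M ⟶ N) (l : L) (m : M) :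
    (MonoidalCategory.whiskerLeft L f) (l ⊗ₜ m) = l ⊗ₜ f m := by
  exact ModuleCat.MonoidalCategory.whiskerLeft_apply L f l m

lemma el_assocM_hom {M N P : ModuleCat.{u} K} (m : M) (n : N) (p : P) :
    (MonoidalCategory.associator M N P).hom ((m ⊗ₜ n) ⊗ₜ p) = m ⊗ₜ (n ⊗ₜ p) := by
  exact ModuleCat.MonoidalCategory.associator_hom_apply m n p

lemma el_assocM_inv {M N P : ModuleCat.{u} K} (m : M) (n : N) (p : P) :
    (MonoidalCategory.associator M N P).inv (m ⊗ₜ (n ⊗ₜ p)) = (m ⊗ₜ n) ⊗ₜ p := by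
  exact ModuleCat.MonoidalCategory.associator_inv_apply m n p

lemma el_luM_hom {M : ModuleCat.{u} K} (r : K) (m : M) :
    (MonoidalCategory.leftUnitor M).hom (r ⊗ₜ m) = r • m := by
  exact ModuleCat.MonoidalCategory.leftUnitor_hom_apply r m

lemma el_luM_inv {M : ModuleCat.{u} K} (m : M) :
    (MonoidalCategory.leftUnitor M).inv m = (1 : K) ⊗ₜ m := by
  exact ModuleCat.MonoidalCategory.leftUnitor_inv_apply m

lemma el_ruM_hom {M : ModuleCat.{u} K} (m : M) (r : K) :
    (MonoidalCategory.rightUnitor M).hom (m ⊗ₜ r) = r • m := by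
  exact ModuleCat.MonoidalCategory.rightUnitor_hom_apply m r

lemma ext2' {A B T : ModuleCat.{u} K} {f g : MonoidalCategory.tensorObj A B ⟶ T}
    (h : ∀ x y, f (x ⊗ₜ y) = g (x ⊗ₜ y)) : f = g :=
  ModuleCat.hom_ext (TensorProduct.ext' h)

end Statement18Kit

section Statement18El

variable {K : Type u} [CommRing K] {a : Alg K}

open MonoidalCategory in
/-- `A` itself as a `K`-`A`-bimodule. -/
noncomputable abbrev Wbim (a : Alg K) : (base K : Alg K) ⟶ a :=
  show Bimod (Mon.trivial (ModuleCat K)) a.val from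
  { X := a.val.X
    actLeft := (λ_ a.val.X).hom
    one_actLeft := by dsimp [Mon.trivial]; simp
    left_assoc := by
      dsimp [Mon.trivial]
      rw [MonoidalCategory.leftUnitor_naturality]
      erw [show (MonObj.mul : 𝟙_ (ModuleCat K) ⊗ 𝟙_ (ModuleCat K) ⟶ 𝟙_ (ModuleCat K)) = (MonoidalCategory.leftUnitor (𝟙_ (ModuleCat K))).hom from rfl]
      monoidal
    actRight := a.val.mul
    actRight_one := a.val.mul_one
    right_assoc := by rw [a.val.mul_assoc]; simp
    middle_assoc := by
      dsimp [Mon.trivial]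
      rw [MonoidalCategory.leftUnitor_naturality, leftUnitor_tensor_hom]
      simp }

@[simp] lemma Wbim_X : (Wbim a).X = a.val.X := rfl
@[simp] lemma Wbim_actRight : (Wbim a).actRight = a.val.mul := rfl

lemma actLeft_base {x : Alg K} (M : (base K : Alg K) ⟶ x) :
    M.actLeft = (MonoidalCategory.leftUnitor M.X).hom := by
  have h := M.one_actLeft
  have h2 : (MonObj.one : _ ⟶ (base K).val.X) = 𝟙 (MonoidalCategory.tensorUnit _) := rfl
  erw [h2, MonoidalCategory.id_whiskerRight, Category.id_comp] at h
  exact h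

/-- Constructor for 2-morphisms out of right modules: the left condition is automatic. -/
noncomputable def mkHom2 {x : Alg K} {M N : (base K : Alg K) ⟶ x} (f : M.X ⟶ N.X)
    (hr : M.actRight ≫ f = MonoidalCategory.whiskerRight f x.val.X ≫ N.actRight) : M ⟶ N :=
  show Bimod.Hom M N from
  { hom := f
    left_act_hom := by
      rw [actLeft_base, actLeft_base]
      exact (MonoidalCategory.leftUnitor_naturality f).symm
    right_act_hom := hr }

@[simp] lemma mkHom2_hom {x : Alg K} {M N : (base K : Alg K) ⟶ x} (f : M.X ⟶ N.X) (hr) :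
    (mkHom2 f hr).hom = f := rfl

variable {x y z : Alg K}

/-- The projection onto the tensor product of bimodules. -/
noncomputable def tpi (P : x ⟶ y) (Q : y ⟶ z) :
    MonoidalCategory.tensorObj P.X Q.X ⟶ (P ≫ Q).X :=
  coequalizer.π (MonoidalCategory.whiskerRight P.actRight Q.X)
    ((MonoidalCategory.associator P.X y.val.X Q.X).hom ≫
      MonoidalCategory.whiskerLeft P.X Q.actLeft)

lemma tpi_surj (P : x ⟶ y) (Q : y ⟶ z) : Function.Surjective (tpi P Q) := by
  dsimp only [tpi]
  exact (ModuleCat.epi_iff_surjective _).1 coequalizer.π_epi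

lemma tpi_ind {P : x ⟶ y} {Q : y ⟶ z} {motive : ((P ≫ Q).X : Type u) → Prop}
    (h0 : motive 0) (hadd : ∀ u v, motive u → motive v → motive (u + v))
    (hp : ∀ p q, motive (tpi P Q (p ⊗ₜ q))) : ∀ w, motive w := by
  intro w
  obtain ⟨t, rfl⟩ := tpi_surj P Q w
  induction t using TensorProduct.induction_on with
  | zero => simpa using h0
  | tmul p q => exact hp p q
  | add s t hs ht => rw [map_add]; exact hadd _ _ hs ht

lemma tpi_rel (P : x ⟶ y) (Q : y ⟶ z) (p : P.X) (m : y.val.X) (q : Q.X) :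
    tpi P Q (P.actRight (p ⊗ₜ m) ⊗ₜ q) = tpi P Q (p ⊗ₜ Q.actLeft (m ⊗ₜ q)) := by
  have h := coequalizer.condition (MonoidalCategory.whiskerRight P.actRight Q.X)
    ((MonoidalCategory.associator P.X y.val.X Q.X).hom ≫
      MonoidalCategory.whiskerLeft P.X Q.actLeft)
  have := happly h ((p ⊗ₜ m) ⊗ₜ q)
  simp [ModuleCat.MonoidalCategory.whiskerRight_apply,
    ModuleCat.MonoidalCategory.whiskerLeft_apply,
    ModuleCat.MonoidalCategory.associator_hom_apply, tpi] at this
  exact this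

lemma el_wl (P : x ⟶ y) {Q Q' : y ⟶ z} (g : Q ⟶ Q') (p : P.X) (q : Q.X) :
    (P ◁ g).hom (tpi P Q (p ⊗ₜ q)) = tpi P Q' (p ⊗ₜ g.hom q) := by
  have h : tpi P Q ≫ (P ◁ g).hom =
      MonoidalCategory.whiskerLeft P.X g.hom ≫ tpi P Q' := by
    show tpi P Q ≫ (Bimod.whiskerLeft P g).hom = _
    dsimp only [tpi, Bimod.whiskerLeft]
    erw [ι_colimMap, parallelPairHom_app_one]
    rfl
  have := happly h (p ⊗ₜ q)
  simpa [ModuleCat.MonoidalCategory.whiskerLeft_apply] using this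

lemma el_wr {P P' : x ⟶ y} (g : P ⟶ P') (Q : y ⟶ z) (p : P.X) (q : Q.X) :
    (g ▷ Q).hom (tpi P Q (p ⊗ₜ q)) = tpi P' Q (g.hom p ⊗ₜ q) := by
  have h : tpi P Q ≫ (g ▷ Q).hom =
      MonoidalCategory.whiskerRight g.hom Q.X ≫ tpi P' Q := by
    show tpi P Q ≫ (Bimod.whiskerRight g Q).hom = _
    dsimp only [tpi, Bimod.whiskerRight]
    erw [ι_colimMap, parallelPairHom_app_one]
    rfl
  have := happly h (p ⊗ₜ q)
  simpa [ModuleCat.MonoidalCategory.whiskerRight_apply] using this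

lemma el_actRight (P : x ⟶ y) (Q : y ⟶ z) (p : P.X) (q : Q.X) (t : z.val.X) :
    (P ≫ Q).actRight (tpi P Q (p ⊗ₜ q) ⊗ₜ t) = tpi P Q (p ⊗ₜ Q.actRight (q ⊗ₜ t)) := by
  have h := Bimod.TensorBimod.π_tensor_id_actRight P Q
  have := happly h ((p ⊗ₜ q) ⊗ₜ t)
  simp [ModuleCat.MonoidalCategory.whiskerRight_apply,
    ModuleCat.MonoidalCategory.whiskerLeft_apply,
    ModuleCat.MonoidalCategory.associator_hom_apply, tpi] at this
  exact this

lemma el_actLeft (P : x ⟶ y) (Q : y ⟶ z) (s : x.val.X) (p : P.X) (q : Q.X) :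
    (P ≫ Q).actLeft (s ⊗ₜ tpi P Q (p ⊗ₜ q)) = tpi P Q (P.actLeft (s ⊗ₜ p) ⊗ₜ q) := by
  have h := Bimod.TensorBimod.whiskerLeft_π_actLeft P Q
  have := happly h (s ⊗ₜ (p ⊗ₜ q))
  simp [ModuleCat.MonoidalCategory.whiskerRight_apply,
    ModuleCat.MonoidalCategory.whiskerLeft_apply,
    ModuleCat.MonoidalCategory.associator_inv_apply, tpi] at this
  exact this

lemma el_assoc_hom {w : Alg K} (P : w ⟶ x) (Q : x ⟶ y) (L : y ⟶ z)
    (p : P.X) (q : Q.X) (l : L.X) :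
    (α_ P Q L).hom.hom (tpi (P ≫ Q) L (tpi P Q (p ⊗ₜ q) ⊗ₜ l)) =
      tpi P (Q ≫ L) (p ⊗ₜ tpi Q L (q ⊗ₜ l)) := by
  have h1 : tpi (P ≫ Q) L ≫ (α_ P Q L).hom.hom = Bimod.AssociatorBimod.homAux P Q L := by
    show tpi (P ≫ Q) L ≫ Bimod.AssociatorBimod.hom P Q L = _
    dsimp only [tpi, Bimod.AssociatorBimod.hom]
    exact coequalizer.π_desc _ _
  have h2 : MonoidalCategory.whiskerRight (tpi P Q) L.X ≫ Bimod.AssociatorBimod.homAux P Q L =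
      (MonoidalCategory.associator P.X Q.X L.X).hom ≫
        MonoidalCategory.whiskerLeft P.X (tpi Q L) ≫ tpi P (Q ≫ L) := by
    dsimp [Bimod.AssociatorBimod.homAux]
    exact π_tensor_id_preserves_coequalizer_inv_desc _ _ _ _
  have := happly h1 (tpi P Q (p ⊗ₜ q) ⊗ₜ l)
  rw [ModuleCat.comp_apply] at this
  rw [this]
  have := happly h2 ((p ⊗ₜ q) ⊗ₜ l)
  simp [ModuleCat.MonoidalCategory.whiskerRight_apply,
    ModuleCat.MonoidalCategory.whiskerLeft_apply,
    ModuleCat.MonoidalCategory.associator_hom_apply] at this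
  exact this

lemma el_assoc_inv {w : Alg K} (P : w ⟶ x) (Q : x ⟶ y) (L : y ⟶ z)
    (p : P.X) (q : Q.X) (l : L.X) :
    (α_ P Q L).inv.hom (tpi P (Q ≫ L) (p ⊗ₜ tpi Q L (q ⊗ₜ l))) =
      tpi (P ≫ Q) L (tpi P Q (p ⊗ₜ q) ⊗ₜ l) := by
  have h1 : tpi P (Q ≫ L) ≫ (α_ P Q L).inv.hom = Bimod.AssociatorBimod.invAux P Q L := by
    show tpi P (Q ≫ L) ≫ Bimod.AssociatorBimod.inv P Q L = _
    dsimp only [tpi, Bimod.AssociatorBimod.inv]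
    exact coequalizer.π_desc _ _
  have h2 : MonoidalCategory.whiskerLeft P.X (tpi Q L) ≫ Bimod.AssociatorBimod.invAux P Q L =
      (MonoidalCategory.associator P.X Q.X L.X).inv ≫
        MonoidalCategory.whiskerRight (tpi P Q) L.X ≫ tpi (P ≫ Q) L := by
    dsimp [Bimod.AssociatorBimod.invAux]
    exact id_tensor_π_preserves_coequalizer_inv_desc _ _ _ _
  have := happly h1 (p ⊗ₜ tpi Q L (q ⊗ₜ l))
  rw [ModuleCat.comp_apply] at this
  rw [this]
  have := happly h2 (p ⊗ₜ (q ⊗ₜ l))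
  simp [ModuleCat.MonoidalCategory.whiskerRight_apply,
    ModuleCat.MonoidalCategory.whiskerLeft_apply,
    ModuleCat.MonoidalCategory.associator_inv_apply] at this
  exact this

end Statement18El

section Statement18EU

variable {K : Type u} [CommRing K] {a : Alg K}

/-- The unit element of an algebra. -/
noncomputable def oneEl (x : Alg K) : x.val.X := x.val.one (1 : K)

lemma el_one_mul (x : a.val.X) : a.val.mul (oneEl a ⊗ₜ x) = x := by
  have h := happly a.val.one_mul ((1 : K) ⊗ₜ x)
  rw [el_comp, el_wrM, el_luM_hom, one_smul] at h
  exact h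

lemma el_mul_one (x : a.val.X) : a.val.mul (x ⊗ₜ oneEl a) = x := by
  have h := happly a.val.mul_one (x ⊗ₜ (1 : K))
  rw [el_comp, el_wlM, el_ruM_hom, one_smul] at h
  exact h

lemma el_mul_assoc (s t v : a.val.X) :
    a.val.mul (a.val.mul (s ⊗ₜ t) ⊗ₜ v) = a.val.mul (s ⊗ₜ a.val.mul (t ⊗ₜ v)) := by
  have h := happly a.val.mul_assoc ((s ⊗ₜ t) ⊗ₜ v)
  rw [el_comp, el_comp, el_comp, el_wrM, el_assocM_hom, el_wlM] at h
  exact h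

variable {x y : Alg K}

lemma el_actRight_one (M : x ⟶ y) (m : M.X) : M.actRight (m ⊗ₜ oneEl y) = m := by
  have h := happly M.actRight_one (m ⊗ₜ (1 : K))
  rw [el_comp, el_wlM, el_ruM_hom, one_smul] at h
  exact h

lemma el_one_actLeft (M : x ⟶ y) (m : M.X) : M.actLeft (oneEl x ⊗ₜ m) = m := by
  have h := happly M.one_actLeft ((1 : K) ⊗ₜ m)
  rw [el_comp, el_wrM, el_luM_hom, one_smul] at h
  exact h

lemma el_middle_assoc (M : x ⟶ y) (s : x.val.X) (m : M.X) (t : y.val.X) :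
    M.actRight (M.actLeft (s ⊗ₜ m) ⊗ₜ t) = M.actLeft (s ⊗ₜ M.actRight (m ⊗ₜ t)) := by
  have h := happly M.middle_assoc ((s ⊗ₜ m) ⊗ₜ t)
  rw [el_comp, el_comp, el_comp, el_wrM, el_assocM_hom, el_wlM] at h
  exact h

lemma el_right_assoc (M : x ⟶ y) (m : M.X) (t t' : y.val.X) :
    M.actRight (m ⊗ₜ y.val.mul (t ⊗ₜ t')) = M.actRight (M.actRight (m ⊗ₜ t) ⊗ₜ t') := by
  have h := happly M.right_assoc (m ⊗ₜ (t ⊗ₜ t'))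
  rw [el_comp, el_comp, el_comp, el_wlM, el_assocM_inv, el_wrM] at h
  exact h

lemma ext3 {A B C T : ModuleCat.{u} K}
    {f g : MonoidalCategory.tensorObj (MonoidalCategory.tensorObj A B) C ⟶ T}
    (h : ∀ x y z, f ((x ⊗ₜ y) ⊗ₜ z) = g ((x ⊗ₜ y) ⊗ₜ z)) : f = g :=
  ModuleCat.hom_ext <| TensorProduct.ext' fun t z => by
    induction t using TensorProduct.induction_on with
    | zero => rw [TensorProduct.zero_tmul, map_zero, map_zero]
    | tmul u v => exact h u v z
    | add s t hs ht => rw [TensorProduct.add_tmul, map_add, map_add, hs, ht]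

/-- `A ⊗_A P ≅ P`, one direction. -/
noncomputable def eW (P : a ⟶ a) : ((Wbim a ≫ P : (base K : Alg K) ⟶ a)).X ⟶ P.X :=
  coequalizer.desc P.actLeft (by simpa [Category.assoc] using P.left_assoc)

lemma el_eW (P : a ⟶ a) (w : a.val.X) (p : P.X) :
    eW P (tpi (Wbim a) P (w ⊗ₜ p)) = P.actLeft (w ⊗ₜ p) := by
  have h : tpi (Wbim a) P ≫ eW P = P.actLeft := coequalizer.π_desc _ _
  have h2 := happly h (w ⊗ₜ p)
  rw [el_comp] at h2
  exact h2

/-- `A ⊗_A P ≅ P`, other direction. -/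
noncomputable def uW (P : a ⟶ a) : P.X ⟶ ((Wbim a ≫ P : (base K : Alg K) ⟶ a)).X :=
  (MonoidalCategory.leftUnitor P.X).inv ≫ MonoidalCategory.whiskerRight a.val.one P.X ≫
    tpi (Wbim a) P

lemma el_uW (P : a ⟶ a) (p : P.X) : uW P p = tpi (Wbim a) P (oneEl a ⊗ₜ p) := by
  have : uW P p = (tpi (Wbim a) P) ((MonoidalCategory.whiskerRight a.val.one P.X)
      ((MonoidalCategory.leftUnitor P.X).inv p)) := rfl
  rw [this, el_luM_inv, el_wrM]
  rfl

lemma el_uW_eW (P : a ⟶ a) (p : P.X) : eW P (uW P p) = p := by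
  rw [el_uW, el_eW, el_one_actLeft]

lemma uW_eW (P : a ⟶ a) : uW P ≫ eW P = 𝟙 P.X := by
  apply ModuleCat.hom_ext; apply LinearMap.ext; intro p
  rw [el_comp, el_uW_eW, el_id]

lemma el_eW_uW (P : a ⟶ a) (z : ((Wbim a ≫ P : (base K : Alg K) ⟶ a)).X) :
    uW P (eW P z) = z := by
  induction z using tpi_ind with
  | h0 => rw [map_zero, map_zero]
  | hadd u v hu hv => rw [map_add, map_add, hu, hv]
  | hp w p =>
      rw [el_eW, el_uW]
      have h1 := tpi_rel (Wbim a) P (oneEl a) w p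
      rw [← h1]
      have h2 : (Wbim a).actRight (oneEl a ⊗ₜ w) = w := el_one_mul w
      rw [h2]

lemma eW_right (P : a ⟶ a) :
    (Wbim a ≫ P : (base K : Alg K) ⟶ a).actRight ≫ eW P =
      MonoidalCategory.whiskerRight (eW P) a.val.X ≫ P.actRight := by
  apply ext2'; intro z yy
  rw [el_comp, el_comp, el_wrM]
  induction z using tpi_ind with
  | h0 => simp
  | hadd u v hu hv => simp only [TensorProduct.add_tmul, map_add, hu, hv]
  | hp w p => rw [el_actRight, el_eW, el_eW, el_middle_assoc]

lemma uW_right (P : a ⟶ a) :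
    P.actRight ≫ uW P =
      MonoidalCategory.whiskerRight (uW P) a.val.X ≫
        (Wbim a ≫ P : (base K : Alg K) ⟶ a).actRight := by
  apply ext2'; intro p yy
  rw [el_comp, el_comp, el_wrM, el_uW, el_uW, el_actRight]

/-- Transport a right-linear map along the second tensor factor. -/
noncomputable def transE {Z : (base K : Alg K) ⟶ a} {P : a ⟶ a} (Q : a ⟶ a) (e : Z.X ⟶ P.X)
    (he : Z.actRight ≫ e = MonoidalCategory.whiskerRight e a.val.X ≫ P.actRight) :
    ((Z ≫ Q : (base K : Alg K) ⟶ a)).X ⟶ ((P ≫ Q : a ⟶ a)).X :=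
  coequalizer.desc (MonoidalCategory.whiskerRight e Q.X ≫ tpi P Q) (by
    apply ext3; intro z yy q
    have he' := happly he (z ⊗ₜ yy)
    rw [el_comp, el_comp, el_wrM] at he'
    rw [el_comp, el_comp, el_comp, el_comp, el_comp, el_wrM, el_wrM, el_assocM_hom, el_wlM,
      el_wrM, he', tpi_rel])

lemma el_transE {Z : (base K : Alg K) ⟶ a} {P : a ⟶ a} (Q : a ⟶ a) (e : Z.X ⟶ P.X)
    (he) (z : Z.X) (q : Q.X) :
    transE Q e he (tpi Z Q (z ⊗ₜ q)) = tpi P Q (e z ⊗ₜ q) := by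
  have h : tpi Z Q ≫ transE Q e he = MonoidalCategory.whiskerRight e Q.X ≫ tpi P Q :=
    coequalizer.π_desc _ _
  have h2 := happly h (z ⊗ₜ q)
  rw [el_comp, el_comp, el_wrM] at h2
  exact h2

/-- Transport in the other direction. -/
noncomputable def transU {Z : (base K : Alg K) ⟶ a} {P : a ⟶ a} (Q : a ⟶ a) (v : P.X ⟶ Z.X)
    (hv : P.actRight ≫ v = MonoidalCategory.whiskerRight v a.val.X ≫ Z.actRight) :
    ((P ≫ Q : a ⟶ a)).X ⟶ ((Z ≫ Q : (base K : Alg K) ⟶ a)).X :=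
  coequalizer.desc (MonoidalCategory.whiskerRight v Q.X ≫ tpi Z Q) (by
    apply ext3; intro p yy q
    have hv' := happly hv (p ⊗ₜ yy)
    rw [el_comp, el_comp, el_wrM] at hv'
    rw [el_comp, el_comp, el_comp, el_comp, el_comp, el_wrM, el_wrM, el_assocM_hom, el_wlM,
      el_wrM, hv', tpi_rel])

lemma el_transU {Z : (base K : Alg K) ⟶ a} {P : a ⟶ a} (Q : a ⟶ a) (v : P.X ⟶ Z.X)
    (hv) (p : P.X) (q : Q.X) :
    transU Q v hv (tpi P Q (p ⊗ₜ q)) = tpi Z Q (v p ⊗ₜ q) := by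
  have h : tpi P Q ≫ transU Q v hv = MonoidalCategory.whiskerRight v Q.X ≫ tpi Z Q :=
    coequalizer.π_desc _ _
  have h2 := happly h (p ⊗ₜ q)
  rw [el_comp, el_comp, el_wrM] at h2
  exact h2

/-- Left multiplication by `xx`, as an endomorphism of the bimodule `W`. -/
noncomputable def ell (xx : a.val.X) : (Wbim a : (base K : Alg K) ⟶ a) ⟶ Wbim a :=
  mkHom2 (ModuleCat.ofHom
    { toFun := fun w => a.val.mul (xx ⊗ₜ w)
      map_add' := fun u v => by
        show a.val.mul (xx ⊗ₜ (u + v)) = a.val.mul (xx ⊗ₜ u) + a.val.mul (xx ⊗ₜ v)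
        rw [TensorProduct.tmul_add, map_add]
      map_smul' := fun k w => by
        show a.val.mul (xx ⊗ₜ (k • w)) = k • a.val.mul (xx ⊗ₜ w)
        rw [TensorProduct.tmul_smul, map_smul] })
    (by
      apply ext2'; intro w yy
      rw [el_comp, el_comp, el_wrM]
      show a.val.mul (xx ⊗ₜ a.val.mul (w ⊗ₜ yy)) = a.val.mul (a.val.mul (xx ⊗ₜ w) ⊗ₜ yy)
      rw [el_mul_assoc])

lemma el_ell (xx w : a.val.X) : (ell xx).hom w = a.val.mul (xx ⊗ₜ w) := rfl

/-- Right action by a fixed element `m` of a module, as a 2-morphism `W ⟶ M`. -/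
noncomputable def gmHom (M : (base K : Alg K) ⟶ a) (m : M.X) :
    (Wbim a : (base K : Alg K) ⟶ a) ⟶ M :=
  mkHom2 (ModuleCat.ofHom
    { toFun := fun w => M.actRight (m ⊗ₜ w)
      map_add' := fun u v => by
        show M.actRight (m ⊗ₜ (u + v)) = M.actRight (m ⊗ₜ u) + M.actRight (m ⊗ₜ v)
        rw [TensorProduct.tmul_add, map_add]
      map_smul' := fun k w => by
        show M.actRight (m ⊗ₜ (k • w)) = k • M.actRight (m ⊗ₜ w)
        rw [TensorProduct.tmul_smul, map_smul] })
    (by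
      apply ext2'; intro w yy
      rw [el_comp, el_comp, el_wrM]
      show M.actRight (m ⊗ₜ a.val.mul (w ⊗ₜ yy)) = M.actRight (M.actRight (m ⊗ₜ w) ⊗ₜ yy)
      rw [el_right_assoc])

lemma el_gmHom (M : (base K : Alg K) ⟶ a) (m : M.X) (w : a.val.X) :
    (gmHom M m).hom w = M.actRight (m ⊗ₜ w) := rfl

end Statement18EU

section Statement18Fwd

variable {K : Type u} [CommRing K] {a : Alg K}

lemma bim_el {x y : Alg K} {P Q : x ⟶ y} {f g : P ⟶ Q} (h : f = g) (zz : P.X) :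
    f.hom zz = g.hom zz := by rw [h]

lemma bim_comp_el {x y : Alg K} {P Q R : x ⟶ y} (f : P ⟶ Q) (g : Q ⟶ R) (zz : P.X) :
    (f ≫ g).hom zz = g.hom (f.hom zz) := rfl

lemma bim_id_el {x y : Alg K} (P : x ⟶ y) (zz : P.X) : (𝟙 P : P ⟶ P).hom zz = zz := rfl

lemma comod_el {C : Coring a} {M N : Comod C} {f g : M ⟶ N} (h : f = g) (zz : M.M.X) :
    f.f.hom zz = g.f.hom zz := by rw [h]

lemma comod_comp_el {C : Coring a} {M N P : Comod C} (f : M ⟶ N) (g : N ⟶ P) (zz : M.M.X) :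
    (f ≫ g).f.hom zz = g.f.hom (f.f.hom zz) := rfl

lemma comod_id_el {C : Coring a} (M : Comod C) (zz : M.M.X) :
    (𝟙 M : M ⟶ M).f.hom zz = zz := rfl

variable (C : Coring a)

lemma key0 (t : ((C.X ≫ C.X : a ⟶ a)).X) :
    (α_ (Wbim a) C.X C.X).inv.hom (tpi (Wbim a) (C.X ≫ C.X) (oneEl a ⊗ₜ t)) =
      transU C.X (uW C.X) (uW_right C.X) t := by
  induction t using tpi_ind with
  | h0 => simp [TensorProduct.tmul_zero]
  | hadd s t hs ht => simp only [TensorProduct.tmul_add, map_add, hs, ht]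
  | hp c1 c2 =>
      rw [el_assoc_inv, el_transU]
      rw [show tpi (Wbim a) C.X (oneEl a ⊗ₜ c1) = uW C.X c1 from (el_uW C.X c1).symm]

lemma claim1 (c : C.X.X) :
    (Fr C (Wbim a)).coact.hom (uW C.X c) =
      transU C.X (uW C.X) (uW_right C.X) (C.comul.hom c) := by
  calc (Fr C (Wbim a)).coact.hom (uW C.X c)
      = (α_ (Wbim a) C.X C.X).inv.hom ((Wbim a ◁ C.comul).hom (uW C.X c)) := rfl
    _ = (α_ (Wbim a) C.X C.X).inv.hom
          ((Wbim a ◁ C.comul).hom (tpi (Wbim a) C.X (oneEl a ⊗ₜ c))) := by rw [el_uW]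
    _ = (α_ (Wbim a) C.X C.X).inv.hom
          (tpi (Wbim a) (C.X ≫ C.X) (oneEl a ⊗ₜ C.comul.hom c)) :=
        congrArg _ (el_wl (Wbim a) C.comul (oneEl a) c)
    _ = transU C.X (uW C.X) (uW_right C.X) (C.comul.hom c) := key0 C _

lemma hq (z : ((C.X ≫ C.X : a ⟶ a)).X) :
    transE C.X (eW C.X) (eW_right C.X) (transU C.X (uW C.X) (uW_right C.X) z) = z := by
  induction z using tpi_ind with
  | h0 => simp
  | hadd s t hs ht => simp only [map_add, hs, ht]
  | hp c d => rw [el_transU, el_transE, el_uW_eW]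

end Statement18Fwd

/-- **Statement 18.**  Let `C` be an `A`-coring.  The forgetful functor
`U_A : Comod-C ⥤ Mod-A` is separable if and only if there is an `A`-bimodule
map `γ : C ⊗_A C ⟶ A` such that `γ ∘ Δ_C = ε_C` and (in Sweedler notation)
`c₍₁₎ γ(c₍₂₎ ⊗ c') = γ(c ⊗ c'₍₁₎) c'₍₂₎`, i.e.
`(C ⊗ γ)(Δ_C ⊗ C) = (γ ⊗ C)(C ⊗ Δ_C)` as maps `C ⊗_A C ⟶ C`. -/
theorem statement18 {K : Type u} [CommRing K] {a : Alg K} (C : Coring a) :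
    Functor.Separable (forgetComod (base K) C) ↔
      ∃ γ : C.X ≫ C.X ⟶ 𝟙 a,
        C.comul ≫ γ = C.counit ∧
        C.comul ▷ C.X ≫ (α_ C.X C.X C.X).hom ≫ C.X ◁ γ ≫ (ρ_ C.X).hom =
          C.X ◁ C.comul ≫ (α_ C.X C.X C.X).inv ≫ γ ▷ C.X ≫ (λ_ C.X).hom := by
  constructor
  · intro hsep
    obtain ⟨ζ, hζ1, hζ2⟩ := hsep
    -- Rafael-style naturality for the splitting, specialized to free comodules
    have N2 : ∀ (M N : Comod C) (f : M ⟶ N),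
        FrMap C f.f ≫ ζ (Fr C N.M) N (vmap C N.M) = ζ (Fr C M.M) M (vmap C M.M) ≫ f := by
      intro M N f
      have e1 := hζ2 (Fr C N.M) (Fr C M.M) N N (FrMap C f.f) (𝟙 N) (vmap C N.M)
      have e2 := hζ2 (Fr C M.M) (Fr C M.M) M N (𝟙 (Fr C M.M)) f (vmap C M.M)
      simp only [CategoryTheory.Functor.map_id, Category.comp_id, Category.id_comp] at e1 e2
      have harg : (forgetComod (base K) C).map (FrMap C f.f) ≫ vmap C N.M =
          vmap C M.M ≫ (forgetComod (base K) C).map f := vmap_natural C f.f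
      erw [Category.comp_id, harg] at e1
      rw [← e1, ← e2]
      rfl
    have N1 : ∀ M : Comod C, coactHom M ≫ ζ (Fr C M.M) M (vmap C M.M) = 𝟙 M := by
      intro M
      have e := hζ2 (Fr C M.M) M M M (coactHom M) (𝟙 M) (vmap C M.M)
      simp only [CategoryTheory.Functor.map_id, Category.comp_id, Category.id_comp] at e
      have harg : (forgetComod (base K) C).map (coactHom M) ≫ vmap C M.M = 𝟙 M.M := by
        show M.coact ≫ vmap C M.M = 𝟙 M.M
        exact M.counit
      erw [Category.comp_id, harg] at e
      rw [← e]
      exact hζ1 _ _ (𝟙 M)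
    -- the two retraction morphisms
    set πd : Fr C ((Fr C (Wbim a)).M) ⟶ Fr C (Wbim a) :=
      ζ (Fr C ((Fr C (Wbim a)).M)) (Fr C (Wbim a)) (vmap C (Fr C (Wbim a)).M) with hπd
    set ωd : Fr C ((Fr C ((Fr C (Wbim a)).M)).M) ⟶ Fr C ((Fr C (Wbim a)).M) :=
      ζ (Fr C ((Fr C ((Fr C (Wbim a)).M)).M)) (Fr C ((Fr C (Wbim a)).M))
        (vmap C (Fr C ((Fr C (Wbim a)).M)).M) with hωd
    have F1' : ∀ zz : ((Fr C (Wbim a)).M.X : Type u),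
        πd.f.hom ((Fr C (Wbim a)).coact.hom zz) = zz := by
      intro zz
      exact comod_el (N1 (Fr C (Wbim a))) zz
    have F2' : ∀ zz, (πd.f ▷ C.X).hom ((Fr C ((Fr C (Wbim a)).M)).coact.hom zz) =
        (Fr C (Wbim a)).coact.hom (πd.f.hom zz) := by
      intro zz
      exact bim_el πd.colinear zz
    have F4' : ∀ zz, ωd.f.hom (((Fr C (Wbim a)).coact ▷ C.X).hom zz) =
        (Fr C (Wbim a)).coact.hom (πd.f.hom zz) := by
      intro zz
      exact comod_el (N2 (Fr C (Wbim a)) (Fr C ((Fr C (Wbim a)).M)) (coactHom (Fr C (Wbim a)))) zz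
    have F5' : ∀ (m : ((Fr C (Wbim a)).M.X : Type u)) zz,
        ωd.f.hom (((gmHom (Wbim a ≫ C.X) m ▷ C.X) ▷ C.X).hom zz) =
          (gmHom (Wbim a ≫ C.X) m ▷ C.X).hom (πd.f.hom zz) := by
      intro m zz
      exact comod_el (N2 (Fr C (Wbim a)) (Fr C ((Fr C (Wbim a)).M))
        (FrMap C (gmHom (Wbim a ≫ C.X) m))) zz
    have F6' : ∀ (xx : a.val.X) zz,
        πd.f.hom (((ell xx ▷ C.X) ▷ C.X).hom zz) = (ell xx ▷ C.X).hom (πd.f.hom zz) := by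
      intro xx zz
      exact comod_el (N2 (Fr C (Wbim a)) (Fr C (Wbim a)) (FrMap C (ell xx))) zz
    -- the peeled retraction map
    set p0 : ((C.X ≫ C.X : a ⟶ a)).X ⟶ C.X.X :=
      transU C.X (uW C.X) (uW_right C.X) ≫ πd.f.hom ≫ eW C.X with hp0
    have el_p0 : ∀ cc dd, p0 (tpi C.X C.X (cc ⊗ₜ dd)) =
        eW C.X (πd.f.hom (tpi (Wbim a ≫ C.X) C.X (uW C.X cc ⊗ₜ dd))) := by
      intro cc dd
      calc p0 (tpi C.X C.X (cc ⊗ₜ dd))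
          = eW C.X (πd.f.hom (transU C.X (uW C.X) (uW_right C.X) (tpi C.X C.X (cc ⊗ₜ dd)))) := rfl
        _ = _ := by rw [el_transU]
    -- πd applied to a u-dressed element is again u-dressed
    have hP2u : ∀ cc dd, πd.f.hom (tpi (Wbim a ≫ C.X) C.X (uW C.X cc ⊗ₜ dd)) =
        uW C.X (eW C.X (πd.f.hom (tpi (Wbim a ≫ C.X) C.X (uW C.X cc ⊗ₜ dd)))) :=
      fun cc dd => (el_eW_uW C.X _).symm
    -- left action compatibility
    have hu1act : ∀ (xx : a.val.X) (cc : C.X.X),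
        uW C.X (C.X.actLeft (xx ⊗ₜ cc)) = (ell xx ▷ C.X).hom (uW C.X cc) := by
      intro xx cc
      have h1 : uW C.X (C.X.actLeft (xx ⊗ₜ cc)) = tpi (Wbim a) C.X (xx ⊗ₜ cc) := by
        rw [el_uW, ← tpi_rel]
        have h2 : (Wbim a).actRight (oneEl a ⊗ₜ xx) = xx := el_one_mul xx
        rw [h2]
      have h3 : (ell xx ▷ C.X).hom (uW C.X cc) = tpi (Wbim a) C.X (xx ⊗ₜ cc) := by
        rw [el_uW]
        calc (ell xx ▷ C.X).hom (tpi (Wbim a) C.X (oneEl a ⊗ₜ cc))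
            = tpi (Wbim a) C.X ((ell xx).hom (oneEl a) ⊗ₜ cc) :=
              el_wr (ell xx) C.X (oneEl a) cc
          _ = tpi (Wbim a) C.X (a.val.mul (xx ⊗ₜ oneEl a) ⊗ₜ cc) := rfl
          _ = tpi (Wbim a) C.X (xx ⊗ₜ cc) := by rw [el_mul_one]
      rw [h1, h3]
    have hellq : ∀ (xx : a.val.X) (v : C.X.X),
        (ell xx ▷ C.X).hom (uW C.X v) = tpi (Wbim a) C.X (xx ⊗ₜ v) := by
      intro xx v
      rw [el_uW]
      calc (ell xx ▷ C.X).hom (tpi (Wbim a) C.X (oneEl a ⊗ₜ v))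
          = tpi (Wbim a) C.X ((ell xx).hom (oneEl a) ⊗ₜ v) := el_wr (ell xx) C.X (oneEl a) v
        _ = tpi (Wbim a) C.X (a.val.mul (xx ⊗ₜ oneEl a) ⊗ₜ v) := rfl
        _ = tpi (Wbim a) C.X (xx ⊗ₜ v) := by rw [el_mul_one]
    have hlf : (C.X ≫ C.X : a ⟶ a).actLeft ≫ p0 =
        MonoidalCategory.whiskerLeft a.val.X p0 ≫ C.X.actLeft := by
      apply ModuleCat.hom_ext
      apply TensorProduct.ext'
      intro xx z
      induction z using tpi_ind with
      | h0 => simp [TensorProduct.tmul_zero]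
      | hadd s t hs ht => simp only [TensorProduct.tmul_add, map_add, hs, ht]
      | hp cc dd =>
          calc ((C.X ≫ C.X : a ⟶ a).actLeft ≫ p0) (xx ⊗ₜ tpi C.X C.X (cc ⊗ₜ dd))
              = p0 ((C.X ≫ C.X : a ⟶ a).actLeft (xx ⊗ₜ tpi C.X C.X (cc ⊗ₜ dd))) := rfl
            _ = p0 (tpi C.X C.X (C.X.actLeft (xx ⊗ₜ cc) ⊗ₜ dd)) := by
                rw [el_actLeft C.X C.X xx cc dd]
            _ = eW C.X (πd.f.hom (tpi (Wbim a ≫ C.X) C.X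
                  (uW C.X (C.X.actLeft (xx ⊗ₜ cc)) ⊗ₜ dd))) := el_p0 _ _
            _ = eW C.X (πd.f.hom (tpi (Wbim a ≫ C.X) C.X
                  ((ell xx ▷ C.X).hom (uW C.X cc) ⊗ₜ dd))) := by rw [hu1act]
            _ = eW C.X (πd.f.hom (((ell xx ▷ C.X) ▷ C.X).hom
                  (tpi (Wbim a ≫ C.X) C.X (uW C.X cc ⊗ₜ dd)))) := by
                rw [el_wr (ell xx ▷ C.X) C.X (uW C.X cc) dd]
            _ = eW C.X ((ell xx ▷ C.X).hom (πd.f.hom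
                  (tpi (Wbim a ≫ C.X) C.X (uW C.X cc ⊗ₜ dd)))) := by rw [F6']
            _ = eW C.X ((ell xx ▷ C.X).hom (uW C.X (eW C.X (πd.f.hom
                  (tpi (Wbim a ≫ C.X) C.X (uW C.X cc ⊗ₜ dd)))))) := by rw [← hP2u]
            _ = eW C.X (tpi (Wbim a) C.X (xx ⊗ₜ eW C.X (πd.f.hom
                  (tpi (Wbim a ≫ C.X) C.X (uW C.X cc ⊗ₜ dd))))) := by rw [hellq]
            _ = C.X.actLeft (xx ⊗ₜ eW C.X (πd.f.hom
                  (tpi (Wbim a ≫ C.X) C.X (uW C.X cc ⊗ₜ dd)))) := el_eW _ _ _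
            _ = C.X.actLeft (xx ⊗ₜ p0 (tpi C.X C.X (cc ⊗ₜ dd))) := by rw [el_p0]
            _ = C.X.actLeft ((MonoidalCategory.whiskerLeft a.val.X p0)
                  (xx ⊗ₜ tpi C.X C.X (cc ⊗ₜ dd))) := by rw [el_wlM]
            _ = (MonoidalCategory.whiskerLeft a.val.X p0 ≫ C.X.actLeft)
                  (xx ⊗ₜ tpi C.X C.X (cc ⊗ₜ dd)) := rfl
    have hrt : (C.X ≫ C.X : a ⟶ a).actRight ≫ p0 =
        MonoidalCategory.whiskerRight p0 a.val.X ≫ C.X.actRight := by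
      apply ModuleCat.hom_ext
      apply TensorProduct.ext'
      intro z yy
      induction z using tpi_ind with
      | h0 => simp [TensorProduct.zero_tmul]
      | hadd s t hs ht => simp only [TensorProduct.add_tmul, map_add, hs, ht]
      | hp cc dd =>
          have hract := happly πd.f.right_act_hom
            (tpi (Wbim a ≫ C.X) C.X (uW C.X cc ⊗ₜ dd) ⊗ₜ yy)
          rw [el_comp, el_comp, el_wrM] at hract
          calc ((C.X ≫ C.X : a ⟶ a).actRight ≫ p0) (tpi C.X C.X (cc ⊗ₜ dd) ⊗ₜ yy)
              = p0 ((C.X ≫ C.X : a ⟶ a).actRight (tpi C.X C.X (cc ⊗ₜ dd) ⊗ₜ yy)) := rfl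
            _ = p0 (tpi C.X C.X (cc ⊗ₜ C.X.actRight (dd ⊗ₜ yy))) := by
                rw [el_actRight C.X C.X cc dd yy]
            _ = eW C.X (πd.f.hom (tpi (Wbim a ≫ C.X) C.X
                  (uW C.X cc ⊗ₜ C.X.actRight (dd ⊗ₜ yy)))) := el_p0 _ _
            _ = eW C.X (πd.f.hom ((Fr C ((Fr C (Wbim a)).M)).M.actRight
                  (tpi (Wbim a ≫ C.X) C.X (uW C.X cc ⊗ₜ dd) ⊗ₜ yy))) :=
                congrArg (fun t => eW C.X (πd.f.hom t))
                  (el_actRight (Wbim a ≫ C.X) C.X (uW C.X cc) dd yy).symm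
            _ = eW C.X ((Fr C (Wbim a)).M.actRight
                  (πd.f.hom (tpi (Wbim a ≫ C.X) C.X (uW C.X cc ⊗ₜ dd)) ⊗ₜ yy)) := by
                rw [hract]
            _ = eW C.X ((Fr C (Wbim a)).M.actRight
                  (uW C.X (eW C.X (πd.f.hom (tpi (Wbim a ≫ C.X) C.X (uW C.X cc ⊗ₜ dd)))) ⊗ₜ yy))
                := by rw [← hP2u]
            _ = eW C.X ((Fr C (Wbim a)).M.actRight
                  (tpi (Wbim a) C.X (oneEl a ⊗ₜ eW C.X (πd.f.hom
                    (tpi (Wbim a ≫ C.X) C.X (uW C.X cc ⊗ₜ dd)))) ⊗ₜ yy)) := by rw [el_uW]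
            _ = eW C.X (tpi (Wbim a) C.X (oneEl a ⊗ₜ C.X.actRight (eW C.X (πd.f.hom
                  (tpi (Wbim a ≫ C.X) C.X (uW C.X cc ⊗ₜ dd))) ⊗ₜ yy))) :=
                congrArg (eW C.X) (el_actRight (Wbim a) C.X (oneEl a) _ yy)
            _ = C.X.actLeft (oneEl a ⊗ₜ C.X.actRight (eW C.X (πd.f.hom
                  (tpi (Wbim a ≫ C.X) C.X (uW C.X cc ⊗ₜ dd))) ⊗ₜ yy)) := el_eW _ _ _
            _ = C.X.actRight (eW C.X (πd.f.hom
                  (tpi (Wbim a ≫ C.X) C.X (uW C.X cc ⊗ₜ dd))) ⊗ₜ yy) := el_one_actLeft _ _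
            _ = C.X.actRight (p0 (tpi C.X C.X (cc ⊗ₜ dd)) ⊗ₜ yy) := by rw [el_p0]
            _ = C.X.actRight ((MonoidalCategory.whiskerRight p0 a.val.X)
                  (tpi C.X C.X (cc ⊗ₜ dd) ⊗ₜ yy)) := by rw [el_wrM]
            _ = (MonoidalCategory.whiskerRight p0 a.val.X ≫ C.X.actRight)
                  (tpi C.X C.X (cc ⊗ₜ dd) ⊗ₜ yy) := rfl
    set δbim : (C.X ≫ C.X : a ⟶ a) ⟶ C.X :=
      (⟨p0, hlf, hrt⟩ : Bimod.Hom _ _) with hδ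
    have hδhom : δbim.hom = p0 := rfl
    have hΔδ : C.comul ≫ δbim = 𝟙 C.X := by
      apply Bimod.hom_ext
      apply ModuleCat.hom_ext
      apply LinearMap.ext
      intro cc
      calc (C.comul ≫ δbim).hom cc
          = eW C.X (πd.f.hom (transU C.X (uW C.X) (uW_right C.X) (C.comul.hom cc))) := rfl
        _ = eW C.X (πd.f.hom ((Fr C (Wbim a)).coact.hom (uW C.X cc))) :=
            congrArg (fun t => eW C.X (πd.f.hom t)) (claim1 C cc).symm
        _ = eW C.X (uW C.X cc) := congrArg (eW C.X) (F1' (uW C.X cc))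
        _ = cc := el_uW_eW C.X cc
        _ = (𝟙 C.X : C.X ⟶ C.X).hom cc := rfl
    have hA : ∀ (m : ((Fr C (Wbim a)).M.X : Type u)) (cc dd : C.X.X),
        ωd.f.hom (tpi ((Wbim a ≫ C.X) ≫ C.X) C.X
            (tpi (Wbim a ≫ C.X) C.X (m ⊗ₜ cc) ⊗ₜ dd)) =
          tpi (Wbim a ≫ C.X) C.X (m ⊗ₜ eW C.X (πd.f.hom
            (tpi (Wbim a ≫ C.X) C.X (uW C.X cc ⊗ₜ dd)))) := by
      intro m cc dd
      have hg : ∀ v : C.X.X, (gmHom (Wbim a ≫ C.X) m ▷ C.X).hom (uW C.X v) =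
          tpi (Wbim a ≫ C.X) C.X (m ⊗ₜ v) := by
        intro v
        rw [el_uW]
        calc (gmHom (Wbim a ≫ C.X) m ▷ C.X).hom (tpi (Wbim a) C.X (oneEl a ⊗ₜ v))
            = tpi (Wbim a ≫ C.X) C.X ((gmHom (Wbim a ≫ C.X) m).hom (oneEl a) ⊗ₜ v) :=
              el_wr (gmHom (Wbim a ≫ C.X) m) C.X (oneEl a) v
          _ = tpi (Wbim a ≫ C.X) C.X ((Wbim a ≫ C.X).actRight (m ⊗ₜ oneEl a) ⊗ₜ v) := rfl
          _ = tpi (Wbim a ≫ C.X) C.X (m ⊗ₜ v) := by rw [el_actRight_one]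
      have h5 := F5' m (tpi (Wbim a ≫ C.X) C.X (uW C.X cc ⊗ₜ dd))
      calc ωd.f.hom (tpi ((Wbim a ≫ C.X) ≫ C.X) C.X
              (tpi (Wbim a ≫ C.X) C.X (m ⊗ₜ cc) ⊗ₜ dd))
          = ωd.f.hom (tpi ((Wbim a ≫ C.X) ≫ C.X) C.X
              ((gmHom (Wbim a ≫ C.X) m ▷ C.X).hom (uW C.X cc) ⊗ₜ dd)) := by rw [hg]
        _ = ωd.f.hom (((gmHom (Wbim a ≫ C.X) m ▷ C.X) ▷ C.X).hom
              (tpi (Wbim a ≫ C.X) C.X (uW C.X cc ⊗ₜ dd))) :=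
            congrArg ωd.f.hom
              (el_wr (gmHom (Wbim a ≫ C.X) m ▷ C.X) C.X (uW C.X cc) dd).symm
        _ = (gmHom (Wbim a ≫ C.X) m ▷ C.X).hom
              (πd.f.hom (tpi (Wbim a ≫ C.X) C.X (uW C.X cc ⊗ₜ dd))) := h5
        _ = (gmHom (Wbim a ≫ C.X) m ▷ C.X).hom
              (uW C.X (eW C.X (πd.f.hom
                (tpi (Wbim a ≫ C.X) C.X (uW C.X cc ⊗ₜ dd))))) := by rw [← hP2u]
        _ = _ := hg _
    have key : ∀ (t : ((C.X ≫ C.X : a ⟶ a)).X) (dd : C.X.X),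
        (C.X ◁ δbim).hom ((α_ C.X C.X C.X).hom.hom (tpi (C.X ≫ C.X) C.X (t ⊗ₜ dd))) =
          transE C.X (eW C.X) (eW_right C.X) (ωd.f.hom
            (tpi ((Wbim a ≫ C.X) ≫ C.X) C.X
              (transU C.X (uW C.X) (uW_right C.X) t ⊗ₜ dd))) := by
      intro t dd
      induction t using tpi_ind with
      | h0 => simp [TensorProduct.zero_tmul]
      | hadd s t hs ht => simp only [TensorProduct.add_tmul, map_add, hs, ht]
      | hp c1 c2 =>
          calc (C.X ◁ δbim).hom ((α_ C.X C.X C.X).hom.hom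
                (tpi (C.X ≫ C.X) C.X (tpi C.X C.X (c1 ⊗ₜ c2) ⊗ₜ dd)))
              = (C.X ◁ δbim).hom
                  (tpi C.X (C.X ≫ C.X) (c1 ⊗ₜ tpi C.X C.X (c2 ⊗ₜ dd))) := by
                rw [el_assoc_hom C.X C.X C.X c1 c2 dd]
            _ = tpi C.X C.X (c1 ⊗ₜ p0 (tpi C.X C.X (c2 ⊗ₜ dd))) :=
                el_wl C.X δbim c1 _
            _ = tpi C.X C.X (c1 ⊗ₜ eW C.X (πd.f.hom
                  (tpi (Wbim a ≫ C.X) C.X (uW C.X c2 ⊗ₜ dd)))) := by rw [el_p0]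
            _ = tpi C.X C.X (eW C.X (uW C.X c1) ⊗ₜ eW C.X (πd.f.hom
                  (tpi (Wbim a ≫ C.X) C.X (uW C.X c2 ⊗ₜ dd)))) := by rw [el_uW_eW]
            _ = transE C.X (eW C.X) (eW_right C.X)
                  (tpi (Wbim a ≫ C.X) C.X (uW C.X c1 ⊗ₜ eW C.X (πd.f.hom
                    (tpi (Wbim a ≫ C.X) C.X (uW C.X c2 ⊗ₜ dd))))) := by rw [el_transE]
            _ = transE C.X (eW C.X) (eW_right C.X) (ωd.f.hom
                  (tpi ((Wbim a ≫ C.X) ≫ C.X) C.X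
                    (tpi (Wbim a ≫ C.X) C.X (uW C.X c1 ⊗ₜ c2) ⊗ₜ dd))) := by
                rw [hA (uW C.X c1) c2 dd]
            _ = _ := by rw [el_transU]
    have hΛ : (C.comul ▷ C.X ≫ (α_ C.X C.X C.X).hom) ≫ C.X ◁ δbim = δbim ≫ C.comul := by
      apply Bimod.hom_ext
      apply ModuleCat.hom_ext
      apply LinearMap.ext
      intro z
      induction z using tpi_ind with
      | h0 => rw [map_zero, map_zero]
      | hadd s t hs ht => rw [map_add, map_add, hs, ht]
      | hp cc dd =>
          have hB : ωd.f.hom (tpi ((Wbim a ≫ C.X) ≫ C.X) C.X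
                (transU C.X (uW C.X) (uW_right C.X) (C.comul.hom cc) ⊗ₜ dd)) =
              transU C.X (uW C.X) (uW_right C.X) (C.comul.hom (eW C.X (πd.f.hom
                (tpi (Wbim a ≫ C.X) C.X (uW C.X cc ⊗ₜ dd))))) := by
            have h4 := F4' (tpi (Wbim a ≫ C.X) C.X (uW C.X cc ⊗ₜ dd))
            calc ωd.f.hom (tpi ((Wbim a ≫ C.X) ≫ C.X) C.X
                    (transU C.X (uW C.X) (uW_right C.X) (C.comul.hom cc) ⊗ₜ dd))
                = ωd.f.hom (tpi ((Wbim a ≫ C.X) ≫ C.X) C.X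
                    ((Fr C (Wbim a)).coact.hom (uW C.X cc) ⊗ₜ dd)) := by rw [claim1]
              _ = ωd.f.hom (((Fr C (Wbim a)).coact ▷ C.X).hom
                    (tpi (Wbim a ≫ C.X) C.X (uW C.X cc ⊗ₜ dd))) :=
                  congrArg ωd.f.hom
                    (el_wr (Fr C (Wbim a)).coact C.X (uW C.X cc) dd).symm
              _ = (Fr C (Wbim a)).coact.hom
                    (πd.f.hom (tpi (Wbim a ≫ C.X) C.X (uW C.X cc ⊗ₜ dd))) := h4
              _ = (Fr C (Wbim a)).coact.hom
                    (uW C.X (eW C.X (πd.f.hom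
                      (tpi (Wbim a ≫ C.X) C.X (uW C.X cc ⊗ₜ dd))))) := by rw [← hP2u]
              _ = _ := claim1 C _
          calc ((C.comul ▷ C.X ≫ (α_ C.X C.X C.X).hom) ≫ C.X ◁ δbim).hom
                (tpi C.X C.X (cc ⊗ₜ dd))
              = (C.X ◁ δbim).hom ((α_ C.X C.X C.X).hom.hom
                  ((C.comul ▷ C.X).hom (tpi C.X C.X (cc ⊗ₜ dd)))) := rfl
            _ = (C.X ◁ δbim).hom ((α_ C.X C.X C.X).hom.hom
                  (tpi (C.X ≫ C.X) C.X (C.comul.hom cc ⊗ₜ dd))) := by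
                rw [el_wr C.comul C.X cc dd]
            _ = transE C.X (eW C.X) (eW_right C.X) (ωd.f.hom
                  (tpi ((Wbim a ≫ C.X) ≫ C.X) C.X
                    (transU C.X (uW C.X) (uW_right C.X) (C.comul.hom cc) ⊗ₜ dd))) :=
                key (C.comul.hom cc) dd
            _ = transE C.X (eW C.X) (eW_right C.X)
                  (transU C.X (uW C.X) (uW_right C.X) (C.comul.hom (eW C.X (πd.f.hom
                    (tpi (Wbim a ≫ C.X) C.X (uW C.X cc ⊗ₜ dd)))))) := by rw [hB]
            _ = C.comul.hom (eW C.X (πd.f.hom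
                  (tpi (Wbim a ≫ C.X) C.X (uW C.X cc ⊗ₜ dd)))) := hq C _
            _ = C.comul.hom (p0 (tpi C.X C.X (cc ⊗ₜ dd))) := by rw [el_p0]
            _ = (δbim ≫ C.comul).hom (tpi C.X C.X (cc ⊗ₜ dd)) := rfl
    have key2 : ∀ (cc : C.X.X) (t : ((C.X ≫ C.X : a ⟶ a)).X),
        (δbim ▷ C.X).hom ((α_ C.X C.X C.X).inv.hom (tpi C.X (C.X ≫ C.X) (cc ⊗ₜ t))) =
          transE C.X (eW C.X) (eW_right C.X) ((πd.f ▷ C.X).hom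
            ((α_ (Wbim a ≫ C.X) C.X C.X).inv.hom
              (tpi (Wbim a ≫ C.X) (C.X ≫ C.X) (uW C.X cc ⊗ₜ t)))) := by
      intro cc t
      induction t using tpi_ind with
      | h0 => simp [TensorProduct.tmul_zero]
      | hadd s t hs ht => simp only [TensorProduct.tmul_add, map_add, hs, ht]
      | hp d1 d2 =>
          calc (δbim ▷ C.X).hom ((α_ C.X C.X C.X).inv.hom
                (tpi C.X (C.X ≫ C.X) (cc ⊗ₜ tpi C.X C.X (d1 ⊗ₜ d2))))
              = (δbim ▷ C.X).hom
                  (tpi (C.X ≫ C.X) C.X (tpi C.X C.X (cc ⊗ₜ d1) ⊗ₜ d2)) := by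
                rw [el_assoc_inv C.X C.X C.X cc d1 d2]
            _ = tpi C.X C.X (p0 (tpi C.X C.X (cc ⊗ₜ d1)) ⊗ₜ d2) :=
                el_wr δbim C.X _ d2
            _ = tpi C.X C.X (eW C.X (πd.f.hom
                  (tpi (Wbim a ≫ C.X) C.X (uW C.X cc ⊗ₜ d1))) ⊗ₜ d2) := by rw [el_p0]
            _ = transE C.X (eW C.X) (eW_right C.X)
                  (tpi (Wbim a ≫ C.X) C.X (uW C.X (eW C.X (πd.f.hom
                    (tpi (Wbim a ≫ C.X) C.X (uW C.X cc ⊗ₜ d1)))) ⊗ₜ d2)) := by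
                rw [el_transE, el_uW_eW]
            _ = transE C.X (eW C.X) (eW_right C.X)
                  (tpi (Wbim a ≫ C.X) C.X (πd.f.hom
                    (tpi (Wbim a ≫ C.X) C.X (uW C.X cc ⊗ₜ d1)) ⊗ₜ d2)) := by rw [← hP2u]
            _ = transE C.X (eW C.X) (eW_right C.X) ((πd.f ▷ C.X).hom
                  (tpi ((Wbim a ≫ C.X) ≫ C.X) C.X
                    (tpi (Wbim a ≫ C.X) C.X (uW C.X cc ⊗ₜ d1) ⊗ₜ d2))) :=
                congrArg (transE C.X (eW C.X) (eW_right C.X))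
                  (el_wr πd.f C.X (tpi (Wbim a ≫ C.X) C.X (uW C.X cc ⊗ₜ d1)) d2).symm
            _ = _ := by
                rw [el_assoc_inv (Wbim a ≫ C.X) C.X C.X (uW C.X cc) d1 d2]
    have hΞ : (C.X ◁ C.comul ≫ (α_ C.X C.X C.X).inv) ≫ δbim ▷ C.X = δbim ≫ C.comul := by
      apply Bimod.hom_ext
      apply ModuleCat.hom_ext
      apply LinearMap.ext
      intro z
      induction z using tpi_ind with
      | h0 => rw [map_zero, map_zero]
      | hadd s t hs ht => rw [map_add, map_add, hs, ht]
      | hp cc dd =>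
          calc ((C.X ◁ C.comul ≫ (α_ C.X C.X C.X).inv) ≫ δbim ▷ C.X).hom
                (tpi C.X C.X (cc ⊗ₜ dd))
              = (δbim ▷ C.X).hom ((α_ C.X C.X C.X).inv.hom
                  ((C.X ◁ C.comul).hom (tpi C.X C.X (cc ⊗ₜ dd)))) := rfl
            _ = (δbim ▷ C.X).hom ((α_ C.X C.X C.X).inv.hom
                  (tpi C.X (C.X ≫ C.X) (cc ⊗ₜ C.comul.hom dd))) := by
                rw [el_wl C.X C.comul cc dd]
            _ = transE C.X (eW C.X) (eW_right C.X) ((πd.f ▷ C.X).hom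
                  ((α_ (Wbim a ≫ C.X) C.X C.X).inv.hom
                    (tpi (Wbim a ≫ C.X) (C.X ≫ C.X) (uW C.X cc ⊗ₜ C.comul.hom dd)))) :=
                key2 cc (C.comul.hom dd)
            _ = transE C.X (eW C.X) (eW_right C.X) ((πd.f ▷ C.X).hom
                  ((α_ (Wbim a ≫ C.X) C.X C.X).inv.hom
                    (((Wbim a ≫ C.X) ◁ C.comul).hom
                      (tpi (Wbim a ≫ C.X) C.X (uW C.X cc ⊗ₜ dd))))) := by
                rw [el_wl (Wbim a ≫ C.X) C.comul (uW C.X cc) dd]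
            _ = transE C.X (eW C.X) (eW_right C.X) ((πd.f ▷ C.X).hom
                  ((Fr C ((Fr C (Wbim a)).M)).coact.hom
                    (tpi (Wbim a ≫ C.X) C.X (uW C.X cc ⊗ₜ dd)))) := rfl
            _ = transE C.X (eW C.X) (eW_right C.X) ((Fr C (Wbim a)).coact.hom
                  (πd.f.hom (tpi (Wbim a ≫ C.X) C.X (uW C.X cc ⊗ₜ dd)))) := by
                rw [F2']
            _ = transE C.X (eW C.X) (eW_right C.X) ((Fr C (Wbim a)).coact.hom
                  (uW C.X (eW C.X (πd.f.hom
                    (tpi (Wbim a ≫ C.X) C.X (uW C.X cc ⊗ₜ dd)))))) := by rw [← hP2u]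
            _ = transE C.X (eW C.X) (eW_right C.X)
                  (transU C.X (uW C.X) (uW_right C.X) (C.comul.hom (eW C.X (πd.f.hom
                    (tpi (Wbim a ≫ C.X) C.X (uW C.X cc ⊗ₜ dd)))))) := by rw [claim1]
            _ = C.comul.hom (eW C.X (πd.f.hom
                  (tpi (Wbim a ≫ C.X) C.X (uW C.X cc ⊗ₜ dd)))) := hq C _
            _ = C.comul.hom (p0 (tpi C.X C.X (cc ⊗ₜ dd))) := by rw [el_p0]
            _ = (δbim ≫ C.comul).hom (tpi C.X C.X (cc ⊗ₜ dd)) := rfl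
    refine ⟨δbim ≫ C.counit, ?_, ?_⟩
    · rw [← Category.assoc, hΔδ, Category.id_comp]
    · have lhs : C.comul ▷ C.X ≫ (α_ C.X C.X C.X).hom ≫ C.X ◁ (δbim ≫ C.counit) ≫
          (ρ_ C.X).hom = δbim := by
        rw [Bicategory.whiskerLeft_comp]
        calc C.comul ▷ C.X ≫ (α_ C.X C.X C.X).hom ≫
              (C.X ◁ δbim ≫ C.X ◁ C.counit) ≫ (ρ_ C.X).hom
            = ((C.comul ▷ C.X ≫ (α_ C.X C.X C.X).hom) ≫ C.X ◁ δbim) ≫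
                (C.X ◁ C.counit ≫ (ρ_ C.X).hom) := by simp only [Category.assoc]
          _ = (δbim ≫ C.comul) ≫ (C.X ◁ C.counit ≫ (ρ_ C.X).hom) := by rw [hΛ]
          _ = δbim ≫ (C.comul ≫ C.X ◁ C.counit ≫ (ρ_ C.X).hom) := by simp only [Category.assoc]
          _ = δbim := by rw [C.comul_counit, Category.comp_id]
      have rhs : C.X ◁ C.comul ≫ (α_ C.X C.X C.X).inv ≫ (δbim ≫ C.counit) ▷ C.X ≫
          (λ_ C.X).hom = δbim := by
        rw [comp_whiskerRight]
        calc C.X ◁ C.comul ≫ (α_ C.X C.X C.X).inv ≫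
              (δbim ▷ C.X ≫ C.counit ▷ C.X) ≫ (λ_ C.X).hom
            = ((C.X ◁ C.comul ≫ (α_ C.X C.X C.X).inv) ≫ δbim ▷ C.X) ≫
                (C.counit ▷ C.X ≫ (λ_ C.X).hom) := by simp only [Category.assoc]
          _ = (δbim ≫ C.comul) ≫ (C.counit ▷ C.X ≫ (λ_ C.X).hom) := by rw [hΞ]
          _ = δbim ≫ (C.comul ≫ C.counit ▷ C.X ≫ (λ_ C.X).hom) := by simp only [Category.assoc]
          _ = δbim := by rw [C.counit_comul, Category.comp_id]
      rw [lhs, rhs]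
  · rintro ⟨γ, hγ1, hγ2⟩
    refine ⟨fun M N h => ⟨zeta γ M N h, zeta_colinear γ hγ2 M N h⟩, ?_, ?_⟩
    · intro M N f
      apply comodHom_ext'
      exact zeta_retraction γ hγ1 M N f
    · intro X X' Y Y' x y h
      apply comodHom_ext'
      exact zeta_natural γ X X' Y Y' x y h

end CoringSep
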